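/- arXiv:2510.14316 — 2 statements merged into one kernel-verified Lean document; each statement's English description precedes it below -/
import Mathlib

section
/- Let n, m be nonempty finite types and A : Matrix n n ℂ, B : Matrix m m ℂ positive definite Hermitian matrices. Then log (A ⊗ₖ B) = (log A) ⊗ₖ (1 : Matrix m m ℂ) + (1 : Matrix n n ℂ) ⊗ₖ (log B), where A ⊗ₖ B is positive definite Hermitian so that its logarithm is defined. -/
open Matrix Kronecker ComplexOrder

/-- The matrix logarithm of a Hermitian matrix, obtained by applying `Real.log`
through the functional calculus for Hermitian matrices (`Matrix.IsHermitian.cfc`).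
Junk value `0` on non-Hermitian matrices. -/
noncomputable def matLog {n : Type*} [Fintype n] [DecidableEq n]
    (A : Matrix n n ℂ) : Matrix n n ℂ :=
  if h : A.IsHermitian then h.cfc Real.log else 0

/-!
`X ⊗ₖ 1` and `1 ⊗ₖ Y` commute, so `exp (X ⊗ₖ 1 + 1 ⊗ₖ Y) = (exp X ⊗ₖ 1) * (1 ⊗ₖ exp Y)
= exp X ⊗ₖ exp Y`. With `X = log A`, `Y = log B` the right-hand side is `A ⊗ₖ B`, and the
left-hand side is the exponential of a Hermitian matrix, on which `log` inverts `exp`.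
-/

namespace Matrix

variable {n m : Type*}

theorem IsHermitian.kronecker {α : Type*} [CommMagma α] [StarMul α] {X : Matrix n n α}
    {Y : Matrix m m α} (hX : X.IsHermitian) (hY : Y.IsHermitian) : (X ⊗ₖ Y).IsHermitian := by
  rw [IsHermitian, conjTranspose_kronecker, hX, hY]

variable [Fintype n] [Fintype m] [DecidableEq n] [DecidableEq m]

section Kronecker

variable {R : Type*} [CommSemiring R]

def kroneckerOneRingHom : Matrix n n R →+* Matrix (n × m) (n × m) R where
  toFun X := X ⊗ₖ 1
  map_one' := one_kronecker_one
  map_mul' X Y := by rw [← mul_kronecker_mul, one_mul]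
  map_zero' := zero_kronecker _
  map_add' X Y := add_kronecker X Y 1

def oneKroneckerRingHom : Matrix m m R →+* Matrix (n × m) (n × m) R where
  toFun Y := 1 ⊗ₖ Y
  map_one' := one_kronecker_one
  map_mul' X Y := by rw [← mul_kronecker_mul, one_mul]
  map_zero' := kronecker_zero _
  map_add' X Y := kronecker_add 1 X Y

theorem commute_kronecker_one_one_kronecker (X : Matrix n n R) (Y : Matrix m m R) :
    Commute (X ⊗ₖ (1 : Matrix m m R)) ((1 : Matrix n n R) ⊗ₖ Y) := by
  simp only [Commute, SemiconjBy, ← mul_kronecker_mul, mul_one, one_mul]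

variable [TopologicalSpace R] [ContinuousMul R]

theorem continuous_kroneckerOneRingHom :
    Continuous (kroneckerOneRingHom (n := n) (m := m) (R := R)) :=
  continuous_pi fun i => continuous_pi fun j =>
    (continuous_apply_apply i.1 j.1).mul continuous_const

theorem continuous_oneKroneckerRingHom :
    Continuous (oneKroneckerRingHom (n := n) (m := m) (R := R)) :=
  continuous_pi fun i => continuous_pi fun j =>
    continuous_const.mul (continuous_apply_apply i.2 j.2)

end Kronecker

section Exp

open NormedSpace

variable {𝕜 : Type*} [RCLike 𝕜]

/- `exp` on matrices does not depend on a norm; the operator norm is chosen only to apply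
`map_exp`. -/
theorem exp_kronecker_one (X : Matrix n n 𝕜) :
    exp (X ⊗ₖ (1 : Matrix m m 𝕜)) = exp X ⊗ₖ (1 : Matrix m m 𝕜) := by
  open scoped Norms.Operator in
  exact (map_exp (kroneckerOneRingHom (m := m)) continuous_kroneckerOneRingHom X).symm

theorem exp_one_kronecker (Y : Matrix m m 𝕜) :
    exp ((1 : Matrix n n 𝕜) ⊗ₖ Y) = (1 : Matrix n n 𝕜) ⊗ₖ exp Y := by
  open scoped Norms.Operator in
  exact (map_exp (oneKroneckerRingHom (n := n)) continuous_oneKroneckerRingHom Y).symm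

theorem exp_kronecker_one_add_one_kronecker (X : Matrix n n 𝕜) (Y : Matrix m m 𝕜) :
    exp (X ⊗ₖ (1 : Matrix m m 𝕜) + (1 : Matrix n n 𝕜) ⊗ₖ Y) = exp X ⊗ₖ exp Y := by
  rw [exp_add_of_commute _ _ (commute_kronecker_one_one_kronecker X Y), exp_kronecker_one,
    exp_one_kronecker, ← mul_kronecker_mul, mul_one, one_mul]

end Exp

end Matrix

open scoped Matrix.Norms.L2Operator MatrixOrder

theorem matLog_eq_log {n : Type*} [Fintype n] [DecidableEq n] {A : Matrix n n ℂ}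
    (hA : A.IsHermitian) : matLog A = CFC.log A := by
  rw [matLog, dif_pos hA, CFC.log, hA.cfc_eq]

theorem log_kronecker_general {n m : Type*} [Fintype n] [Fintype m]
    [DecidableEq n] [DecidableEq m]
    (A : Matrix n n ℂ) (B : Matrix m m ℂ) (hA : A.PosDef) (hB : B.PosDef) :
    matLog (A ⊗ₖ B) = matLog A ⊗ₖ (1 : Matrix m m ℂ) + (1 : Matrix n n ℂ) ⊗ₖ matLog B := by
  have hlogA : (CFC.log A).IsHermitian := IsSelfAdjoint.log
  have hlogB : (CFC.log B).IsHermitian := IsSelfAdjoint.log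
  have hsum : (CFC.log A ⊗ₖ (1 : Matrix m m ℂ) + (1 : Matrix n n ℂ) ⊗ₖ CFC.log B).IsHermitian :=
    (hlogA.kronecker isHermitian_one).add (isHermitian_one.kronecker hlogB)
  rw [matLog_eq_log hA.isHermitian, matLog_eq_log hB.isHermitian,
    matLog_eq_log (hA.isHermitian.kronecker hB.isHermitian), ← CFC.log_exp _ hsum,
    exp_kronecker_one_add_one_kronecker, CFC.exp_log A hA.isStrictlyPositive,
    CFC.exp_log B hB.isStrictlyPositive]

theorem log_kronecker {n m : Type*} [Fintype n] [Fintype m]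
    [DecidableEq n] [DecidableEq m] [Nonempty n] [Nonempty m]
    (A : Matrix n n ℂ) (B : Matrix m m ℂ) (hA : A.PosDef) (hB : B.PosDef) :
    matLog (A ⊗ₖ B) = matLog A ⊗ₖ (1 : Matrix m m ℂ) + (1 : Matrix n n ℂ) ⊗ₖ matLog B :=
  log_kronecker_general A B hA hB
end

section
/- Let ρ be a faithful (positive definite, trace 1) multipartite density matrix on configurations (i : ι) → d i, with single-site marginals ρᵢ and product of single-site marginals σ_marg, and let σᵢ : Matrix (d i) (d i) ℂ (for each i : ι) be faithful density matrices, with σ_prod the multipartite matrix with entries σ_prod x y := ∏ i, σᵢ (x i) (y i). Then S(ρ ‖ σ_prod) = S(ρ ‖ σ_marg) + ∑ i, S(ρᵢ ‖ σᵢ); in particular S(ρ ‖ σ_marg) ≤ S(ρ ‖ σ_prod), i.e. among all fully uncorrelated (product) states, the product of its own marginals is closest to ρ in quantum relative entropy. -/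
/-!
Write `σ_prod = ⨂ᵢ σᵢ`. Diagonalising each `σᵢ = Uᵢ Dᵢ Uᵢ*` diagonalises `σ_prod` by the
unitary `⨂ᵢ Uᵢ`, and the logarithm of a product of positive eigenvalues is the sum of their
logarithms, so `log σ_prod = ∑ᵢ 1 ⊗ ⋯ ⊗ log σᵢ ⊗ ⋯ ⊗ 1`. Splitting a configuration into its value
at site `i` and the rest turns `1 ⊗ ⋯ ⊗ B ⊗ ⋯ ⊗ 1` into `B ⊗ 1` and `ρᵢ` into the partial trace of
`ρ` over the rest, whence `tr (ρ (1 ⊗ ⋯ ⊗ B ⊗ ⋯ ⊗ 1)) = tr (ρᵢ B)` and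
`tr (ρ log σ_prod) = ∑ᵢ tr (ρᵢ log σᵢ)`. Applying this to `σ_prod` and to `σ_marg` and
subtracting gives the identity.

The inequality is Klein's inequality `S(ρᵢ‖σᵢ) ≥ 0`. In eigenbases `ρ = U diag p U*`,
`σ = V diag q V*` one has `tr (ρ log σ) = ∑ₖₗ pₖ log qₗ |Wₖₗ|²` with `W = U* V` unitary, so the
weights `|Wₖₗ|²` are doubly stochastic; summing `p log q ≤ p log p + q - p` against them gives
`tr (ρ log σ) ≤ tr (ρ log ρ)` as soon as `tr ρ = tr σ`.
-/

open Matrix ComplexOrder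

/-- Von Neumann entropy `S(ρ) = -tr(ρ log ρ)` of a (faithful) density matrix. -/
noncomputable def vnEnt {n : Type*} [Fintype n] [DecidableEq n]
    (ρ : Matrix n n ℂ) : ℝ :=
  -((ρ * matLog ρ).trace).re

/-- Quantum relative entropy `S(ρ‖σ) = tr(ρ log ρ) - tr(ρ log σ)` of faithful
density matrices. -/
noncomputable def relEnt {n : Type*} [Fintype n] [DecidableEq n]
    (ρ σ : Matrix n n ℂ) : ℝ :=
  ((ρ * matLog ρ).trace).re - ((ρ * matLog σ).trace).re

/-- The single-site marginal at site `i` of a multipartite matrix. -/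
noncomputable def siteMarg {ι : Type*} [Fintype ι] [DecidableEq ι]
    {d : ι → Type*} [∀ i, Fintype (d i)] [∀ i, DecidableEq (d i)]
    (ρ : Matrix ((i : ι) → d i) ((i : ι) → d i) ℂ) (i : ι) : Matrix (d i) (d i) ℂ :=
  fun a b => ∑ x : (j : ι) → d j, if x i = a then ρ x (Function.update x i b) else 0

/-- The product of the single-site marginals of a multipartite matrix. -/
noncomputable def prodMarg {ι : Type*} [Fintype ι] [DecidableEq ι]
    {d : ι → Type*} [∀ i, Fintype (d i)] [∀ i, DecidableEq (d i)]
    (ρ : Matrix ((i : ι) → d i) ((i : ι) → d i) ℂ) :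
    Matrix ((i : ι) → d i) ((i : ι) → d i) ℂ :=
  fun x y => ∏ i, siteMarg ρ i (x i) (y i)

open scoped Kronecker

namespace Matrix

section PiKronecker

variable {ι : Type*} [Fintype ι] {R : Type*}

def piKronecker [CommMonoid R] {m n : ι → Type*} (A : ∀ i, Matrix (m i) (n i) R) :
    Matrix (∀ i, m i) (∀ i, n i) R :=
  of fun x y => ∏ i, A i (x i) (y i)

@[simp]
lemma piKronecker_apply [CommMonoid R] {m n : ι → Type*} (A : ∀ i, Matrix (m i) (n i) R)
    (x : ∀ i, m i) (y : ∀ i, n i) : piKronecker A x y = ∏ i, A i (x i) (y i) := rfl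

variable [CommSemiring R]

lemma piKronecker_mul [DecidableEq ι] {l m n : ι → Type*} [∀ i, Fintype (m i)]
    (A : ∀ i, Matrix (l i) (m i) R) (B : ∀ i, Matrix (m i) (n i) R) :
    piKronecker A * piKronecker B = piKronecker (fun i => A i * B i) := by
  ext x y
  simp only [mul_apply, piKronecker_apply, Finset.prod_univ_sum, Fintype.piFinset_univ,
    Finset.prod_mul_distrib]

lemma piKronecker_conjTranspose [StarRing R] {m n : ι → Type*} (A : ∀ i, Matrix (m i) (n i) R) :
    (piKronecker A)ᴴ = piKronecker (fun i => (A i)ᴴ) := by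
  ext x y
  simp [star_prod]

lemma piKronecker_diagonal {n : ι → Type*} [∀ i, DecidableEq (n i)] (v : ∀ i, n i → R) :
    piKronecker (fun i => diagonal (v i)) = diagonal (fun x => ∏ i, v i (x i)) := by
  ext x y
  simp only [piKronecker_apply, diagonal_apply, Finset.prod_ite_zero, Finset.mem_univ,
    forall_const, funext_iff]

lemma piKronecker_one {n : ι → Type*} [∀ i, DecidableEq (n i)] :
    piKronecker (fun i => (1 : Matrix (n i) (n i) R)) = 1 := by
  simpa using piKronecker_diagonal (R := R) (fun i (_ : n i) => (1 : R))

variable [DecidableEq ι] {n : ι → Type*} [∀ i, DecidableEq (n i)]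

lemma piKronecker_mem_unitary [StarRing R] [∀ i, Fintype (n i)]
    (U : ∀ i, unitary (Matrix (n i) (n i) R)) :
    piKronecker (fun i => (U i : Matrix (n i) (n i) R)) ∈ unitary (Matrix _ _ R) := by
  rw [Unitary.mem_iff, star_eq_conjTranspose, piKronecker_conjTranspose, piKronecker_mul,
    piKronecker_mul, ← piKronecker_one]
  exact ⟨congrArg piKronecker (funext fun i => Unitary.star_mul_self_of_mem (U i).2),
    congrArg piKronecker (funext fun i => Unitary.mul_star_self_of_mem (U i).2)⟩

lemma piKronecker_mulSingle_diagonal (i : ι) (w : n i → R) :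
    piKronecker (Pi.mulSingle i (diagonal w)) = diagonal (fun x : ∀ j, n j => w (x i)) := by
  rw [show Pi.mulSingle i (diagonal w)
      = fun j => diagonal (Pi.mulSingle (M := fun j => n j → R) i w j) from
    (funext (Pi.apply_mulSingle (fun _ => diagonal) (fun _ => diagonal_one) i w)).symm,
    piKronecker_diagonal]
  congr 1
  funext x
  rw [Fintype.prod_eq_single i fun j hj => by simp [Pi.mulSingle_eq_of_ne hj]]
  simp

lemma piKronecker_mul_mulSingle_mul [∀ i, Fintype (n i)] (U V : ∀ i, Matrix (n i) (n i) R)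
    (hUV : ∀ i, U i * V i = 1) (i : ι) (B : Matrix (n i) (n i) R) :
    piKronecker U * piKronecker (Pi.mulSingle i B) * piKronecker V
      = piKronecker (Pi.mulSingle i (U i * B * V i)) := by
  rw [piKronecker_mul, piKronecker_mul]
  congr 1
  funext j
  rcases eq_or_ne j i with rfl | h
  · simp
  · simp [Pi.mulSingle_eq_of_ne h, hUV j]

end PiKronecker

section PartialTrace

variable {m n p R : Type*} [Fintype p]

def partialTraceRight [AddCommMonoid R] (M : Matrix (m × p) (n × p) R) : Matrix m n R :=
  of fun a b => ∑ z, M (a, z) (b, z)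

@[simp]
lemma partialTraceRight_apply [AddCommMonoid R] (M : Matrix (m × p) (n × p) R) (a : m) (b : n) :
    partialTraceRight M a b = ∑ z, M (a, z) (b, z) := rfl

lemma trace_partialTraceRight [Fintype m] [AddCommMonoid R] (M : Matrix (m × p) (m × p) R) :
    (partialTraceRight M).trace = M.trace := by
  simp [trace, Fintype.sum_prod_type]

lemma trace_mul_kronecker_one [Fintype m] [Fintype n] [DecidableEq p] [CommSemiring R]
    (M : Matrix (m × p) (n × p) R) (B : Matrix n m R) :
    (M * (B ⊗ₖ (1 : Matrix p p R))).trace = (partialTraceRight M * B).trace := by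
  simp only [trace, diag_apply, mul_apply, kroneckerMap_apply, one_apply, Fintype.sum_prod_type,
    partialTraceRight_apply, mul_ite, mul_one, mul_zero, Finset.sum_mul]
  refine Finset.sum_congr rfl fun a _ => ?_
  rw [Finset.sum_comm]
  simp

lemma PosDef.partialTraceRight [Fintype m] [Nonempty p] [CommRing R] [PartialOrder R]
    [StarRing R] [AddLeftMono R] {M : Matrix (m × p) (m × p) R} (hM : M.PosDef) :
    (Matrix.partialTraceRight M).PosDef := by
  have : Matrix.partialTraceRight M = ∑ z, M.submatrix (fun a => (a, z)) (fun a => (a, z)) := by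
    ext a b
    simp [sum_apply]
  rw [this]
  exact posDef_sum Finset.univ_nonempty fun z _ =>
    hM.submatrix fun a b h => congrArg Prod.fst h

lemma trace_submatrix_equiv [Fintype m] [Fintype n] [AddCommMonoid R] (M : Matrix n n R)
    (e : m ≃ n) : (M.submatrix e e).trace = M.trace :=
  e.sum_comp fun x => M x x

end PartialTrace

end Matrix

lemma Equiv.update_piSplitAt_symm {ι : Type*} [DecidableEq ι] {d : ι → Type*} (i : ι)
    (a b : d i) (z : ∀ j : {j // j ≠ i}, d j) :
    Function.update ((Equiv.piSplitAt i d).symm (a, z)) i b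
      = (Equiv.piSplitAt i d).symm (b, z) := by
  ext j
  rcases eq_or_ne j i with rfl | h
  · simp
  · simp [h]

lemma submatrix_piKronecker_mulSingle {ι : Type*} [Fintype ι] [DecidableEq ι] {d : ι → Type*}
    [∀ i, DecidableEq (d i)] {R : Type*} [CommSemiring R] (i : ι) (B : Matrix (d i) (d i) R) :
    (piKronecker (Pi.mulSingle i B)).submatrix (Equiv.piSplitAt i d).symm
        (Equiv.piSplitAt i d).symm
      = B ⊗ₖ (1 : Matrix (∀ j : {j // j ≠ i}, d j) _ R) := by
  ext ⟨a, z⟩ ⟨b, w⟩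
  rw [← piKronecker_one]
  simp only [submatrix_apply, piKronecker_apply, kroneckerMap_apply,
    Fintype.prod_eq_mul_prod_subtype_ne _ i]
  congr 1
  · simp
  · exact Finset.prod_congr rfl fun j _ => by simp [j.2]

section Site

variable {ι : Type*} [Fintype ι] [DecidableEq ι] {d : ι → Type*} [∀ i, Fintype (d i)]
  [∀ i, DecidableEq (d i)]

lemma siteMarg_eq_partialTraceRight (ρ : Matrix ((i : ι) → d i) ((i : ι) → d i) ℂ) (i : ι) :
    siteMarg ρ i = partialTraceRight
      (ρ.submatrix (Equiv.piSplitAt i d).symm (Equiv.piSplitAt i d).symm) := by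
  ext a b
  rw [siteMarg, ← (Equiv.piSplitAt i d).symm.sum_comp, Fintype.sum_prod_type]
  simp [Equiv.update_piSplitAt_symm]

lemma trace_mul_piKronecker_mulSingle (ρ : Matrix ((i : ι) → d i) ((i : ι) → d i) ℂ) (i : ι)
    (B : Matrix (d i) (d i) ℂ) :
    (ρ * piKronecker (Pi.mulSingle i B)).trace = (siteMarg ρ i * B).trace := by
  rw [← trace_submatrix_equiv _ (Equiv.piSplitAt i d).symm, ← submatrix_mul_equiv _ _ _
    (Equiv.piSplitAt i d).symm, submatrix_piKronecker_mulSingle, trace_mul_kronecker_one,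
    siteMarg_eq_partialTraceRight]

lemma trace_siteMarg (ρ : Matrix ((i : ι) → d i) ((i : ι) → d i) ℂ) (i : ι) :
    (siteMarg ρ i).trace = ρ.trace := by
  rw [siteMarg_eq_partialTraceRight, trace_partialTraceRight, trace_submatrix_equiv]

lemma Matrix.PosDef.siteMarg [∀ i, Nonempty (d i)]
    {ρ : Matrix ((i : ι) → d i) ((i : ι) → d i) ℂ} (hρ : ρ.PosDef) (i : ι) :
    (siteMarg ρ i).PosDef := by
  rw [siteMarg_eq_partialTraceRight]
  exact (hρ.submatrix (Equiv.piSplitAt i d).symm.injective).partialTraceRight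

end Site

section FunctionalCalculus

open Polynomial

variable {𝕜 : Type*} [RCLike 𝕜] {n : Type*} [Fintype n] [DecidableEq n]

lemma Matrix.aeval_diagonal_ofReal (v : n → ℝ) (P : ℝ[X]) :
    aeval (diagonal (RCLike.ofReal ∘ v) : Matrix n n 𝕜) P
      = diagonal (RCLike.ofReal ∘ (fun x => P.eval x) ∘ v) := by
  rw [← diagonalAlgHom_apply (R := ℝ), aeval_algHom_apply, aeval_pi_apply]
  simp [Polynomial.ofReal_eval]

lemma Matrix.cfc_unitary_conj_diagonal (U : unitary (Matrix n n 𝕜)) (v : n → ℝ) (f : ℝ → ℝ) :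
    cfc f ((U : Matrix n n 𝕜) * diagonal (RCLike.ofReal ∘ v) * star (U : Matrix n n 𝕜))
      = (U : Matrix n n 𝕜) * diagonal (RCLike.ofReal ∘ f ∘ v) * star (U : Matrix n n 𝕜) := by
  let φ := Unitary.conjStarAlgAut ℝ (Matrix n n 𝕜) U
  change cfc f (φ (diagonal _)) = φ (diagonal _)
  have hD : IsSelfAdjoint (diagonal (RCLike.ofReal ∘ v) : Matrix n n 𝕜) :=
    isHermitian_diagonal_iff.2 fun k => RCLike.conj_ofReal (v k)
  have hA : IsSelfAdjoint (φ (diagonal (RCLike.ofReal ∘ v))) := hD.map φ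
  -- `cfc f` only sees `f` on the (finite) spectrum, so `f` may be replaced by an interpolating
  -- polynomial, which commutes with `φ` and acts entrywise on diagonal matrices
  obtain ⟨P, hP⟩ : ∃ P : ℝ[X],
      ∀ x ∈ (spectrum ℝ (φ (diagonal (RCLike.ofReal ∘ v)))).toFinite.toFinset ∪
        Finset.univ.image v, P.eval x = f x :=
    ⟨Lagrange.interpolate _ id f, fun x hx => by
      simpa using Lagrange.eval_interpolate_at_node f (Set.injOn_id _) hx⟩
  calc cfc f (φ (diagonal _))
      = cfc (fun x => P.eval x) (φ (diagonal (RCLike.ofReal ∘ v))) :=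
        cfc_congr fun x hx =>
          (hP x (Finset.mem_union_left _ ((Set.toFinite _).mem_toFinset.2 hx))).symm
    _ = φ (aeval (diagonal (RCLike.ofReal ∘ v)) P) := by
        rw [cfc_polynomial P _ hA]
        exact aeval_algHom_apply (φ : Matrix n n 𝕜 →ₐ[ℝ] Matrix n n 𝕜) _ P
    _ = φ (diagonal _) := by
        rw [aeval_diagonal_ofReal]
        congr 2
        funext k
        simp [hP (v k) (by simp)]

end FunctionalCalculus

section MatLog

variable {n : Type*} [Fintype n] [DecidableEq n]

lemma Matrix.IsHermitian.matLog_eq_cfc {A : Matrix n n ℂ} (hA : A.IsHermitian) :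
    matLog A = cfc Real.log A := by
  rw [matLog, dif_pos hA, hA.cfc_eq]

lemma Matrix.IsHermitian.matLog_eq {A : Matrix n n ℂ} (hA : A.IsHermitian) :
    matLog A = (hA.eigenvectorUnitary : Matrix n n ℂ)
      * diagonal (RCLike.ofReal ∘ Real.log ∘ hA.eigenvalues)
      * star (hA.eigenvectorUnitary : Matrix n n ℂ) := by
  rw [matLog, dif_pos hA]
  rfl

lemma Matrix.IsHermitian.eq_unitary_conj_diagonal {A : Matrix n n ℂ} (hA : A.IsHermitian) :
    A = (hA.eigenvectorUnitary : Matrix n n ℂ) * diagonal (RCLike.ofReal ∘ hA.eigenvalues)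
      * star (hA.eigenvectorUnitary : Matrix n n ℂ) :=
  hA.spectral_theorem

end MatLog

lemma matLog_piKronecker {ι : Type*} [Fintype ι] [DecidableEq ι] {d : ι → Type*}
    [∀ i, Fintype (d i)] [∀ i, DecidableEq (d i)] {σ : ∀ i, Matrix (d i) (d i) ℂ}
    (hσ : ∀ i, (σ i).PosDef) :
    matLog (piKronecker σ) = ∑ i, piKronecker (Pi.mulSingle i (matLog (σ i))) := by
  set U := fun i => (hσ i).1.eigenvectorUnitary
  set lam := fun i => (hσ i).1.eigenvalues
  let W : unitary (Matrix _ _ ℂ) := ⟨_, piKronecker_mem_unitary U⟩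
  have hW : star (W : Matrix ((i : ι) → d i) ((i : ι) → d i) ℂ)
      = piKronecker (fun i => star (U i : Matrix (d i) (d i) ℂ)) :=
    piKronecker_conjTranspose _
  have hσW : piKronecker σ = (W : Matrix _ _ ℂ)
      * diagonal (RCLike.ofReal ∘ fun x => ∏ i, lam i (x i)) * star (W : Matrix _ _ ℂ) := by
    conv_lhs => rw [show σ = fun i => (U i : Matrix (d i) (d i) ℂ)
      * diagonal (RCLike.ofReal ∘ lam i) * star (U i : Matrix (d i) (d i) ℂ) from
        funext fun i => (hσ i).1.eq_unitary_conj_diagonal]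
    rw [← piKronecker_mul, ← piKronecker_mul, piKronecker_diagonal, hW]
    simp only [Function.comp_def, RCLike.ofReal_prod]
    rfl
  have hherm : (piKronecker σ).IsHermitian := by
    rw [IsHermitian, piKronecker_conjTranspose]
    exact congrArg piKronecker (funext fun i => (hσ i).1)
  have hlog : diagonal ((RCLike.ofReal : ℝ → ℂ) ∘ Real.log ∘ fun x => ∏ i, lam i (x i))
      = ∑ i, diagonal (fun x : ∀ i, d i => (RCLike.ofReal ∘ Real.log ∘ lam i) (x i)) := by
    refine (congrArg diagonal ?_).trans (map_sum (diagonalAddMonoidHom _ ℂ) _ _)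
    funext x
    simp only [Function.comp_apply, Finset.sum_apply]
    rw [Real.log_prod fun i _ => ((hσ i).eigenvalues_pos (x i)).ne']
    push_cast
    rfl
  rw [hherm.matLog_eq_cfc, hσW, cfc_unitary_conj_diagonal, hlog, Finset.mul_sum, Finset.sum_mul]
  refine Finset.sum_congr rfl fun i _ => ?_
  rw [(hσ i).1.matLog_eq, ← piKronecker_mul_mulSingle_mul _ _
    (fun j => Unitary.mul_star_self_of_mem (U j).2), piKronecker_mulSingle_diagonal, hW]

lemma trace_mul_matLog_piKronecker {ι : Type*} [Fintype ι] [DecidableEq ι] {d : ι → Type*}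
    [∀ i, Fintype (d i)] [∀ i, DecidableEq (d i)] (ρ : Matrix ((i : ι) → d i) ((i : ι) → d i) ℂ)
    {σ : ∀ i, Matrix (d i) (d i) ℂ} (hσ : ∀ i, (σ i).PosDef) :
    (ρ * matLog (piKronecker σ)).trace = ∑ i, (siteMarg ρ i * matLog (σ i)).trace := by
  rw [matLog_piKronecker hσ, Matrix.mul_sum, trace_sum]
  exact Finset.sum_congr rfl fun i _ => trace_mul_piKronecker_mulSingle ρ i _

section Klein

variable {n : Type*} [Fintype n] [DecidableEq n]

lemma Matrix.trace_unitary_conj_diagonal_mul {𝕜 : Type*} [RCLike 𝕜]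
    (U V : unitary (Matrix n n 𝕜)) (a b : n → ℝ) :
    ((U : Matrix n n 𝕜) * diagonal (RCLike.ofReal ∘ a) * star (U : Matrix n n 𝕜)
        * ((V : Matrix n n 𝕜) * diagonal (RCLike.ofReal ∘ b) * star (V : Matrix n n 𝕜))).trace
      = ((∑ k, ∑ l, a k * b l * ‖(star (U : Matrix n n 𝕜) * V) k l‖ ^ 2 : ℝ) : 𝕜) := by
  set W := star (U : Matrix n n 𝕜) * V
  have : (U : Matrix n n 𝕜) * diagonal (RCLike.ofReal ∘ a) * star (U : Matrix n n 𝕜)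
        * ((V : Matrix n n 𝕜) * diagonal (RCLike.ofReal ∘ b) * star (V : Matrix n n 𝕜))
      = (U : Matrix n n 𝕜)
        * (diagonal (RCLike.ofReal ∘ a) * W * diagonal (RCLike.ofReal ∘ b) * star W)
        * star (U : Matrix n n 𝕜) := by
    simp only [W, star_mul, star_star, Matrix.mul_assoc, Unitary.mul_star_self_of_mem U.2,
      Matrix.mul_one]
  rw [this, trace_mul_cycle, Unitary.star_mul_self_of_mem U.2, Matrix.one_mul, trace]
  push_cast
  refine Finset.sum_congr rfl fun k _ => ?_
  rw [diag_apply, mul_apply]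
  refine Finset.sum_congr rfl fun l _ => ?_
  rw [mul_diagonal, diagonal_mul, star_eq_conjTranspose, conjTranspose_apply, RCLike.star_def,
    ← RCLike.mul_conj, Function.comp_apply, Function.comp_apply]
  ring

lemma Matrix.normSq_apply_mem_doublyStochastic {𝕜 : Type*} [RCLike 𝕜] {W : Matrix n n 𝕜}
    (hW : W ∈ unitary (Matrix n n 𝕜)) : of (fun k l => ‖W k l‖ ^ 2) ∈ doublyStochastic ℝ n := by
  refine mem_doublyStochastic_iff_sum.2 ⟨fun _ _ => sq_nonneg _, fun k => ?_, fun l => ?_⟩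
  · have h : (W * star W) k k = (1 : Matrix n n 𝕜) k k := by
      rw [Unitary.mul_star_self_of_mem hW]
    simp only [mul_apply, star_apply, RCLike.star_def, RCLike.mul_conj, one_apply_eq] at h
    simpa only [of_apply] using (by exact_mod_cast h : ∑ j, ‖W k j‖ ^ 2 = 1)
  · have h : (star W * W) l l = (1 : Matrix n n 𝕜) l l := by
      rw [Unitary.star_mul_self_of_mem hW]
    simp only [mul_apply, star_apply, RCLike.star_def, RCLike.conj_mul, one_apply_eq] at h
    simpa only [of_apply] using (by exact_mod_cast h : ∑ i, ‖W i l‖ ^ 2 = 1)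

lemma Real.mul_log_le_mul_log_add_sub {p q : ℝ} (hp : 0 < p) (hq : 0 < q) :
    p * Real.log q ≤ p * Real.log p + q - p := by
  have h := mul_le_mul_of_nonneg_left (Real.log_le_sub_one_of_pos (div_pos hq hp)) hp.le
  rw [Real.log_div hq.ne' hp.ne', mul_sub, mul_sub, mul_div_cancel₀ _ hp.ne', mul_one] at h
  linarith

lemma sum_mul_log_le_of_mem_doublyStochastic {p q : n → ℝ} (hp : ∀ k, 0 < p k)
    (hq : ∀ l, 0 < q l) (hpq : ∑ k, p k = ∑ l, q l) {c : Matrix n n ℝ}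
    (hc : c ∈ doublyStochastic ℝ n) :
    ∑ k, ∑ l, p k * Real.log (q l) * c k l ≤ ∑ k, p k * Real.log (p k) := by
  obtain ⟨hc0, hrow, hcol⟩ := mem_doublyStochastic_iff_sum.1 hc
  calc ∑ k, ∑ l, p k * Real.log (q l) * c k l
      ≤ ∑ k, ∑ l, ((p k * Real.log (p k) - p k) * c k l + q l * c k l) :=
        Finset.sum_le_sum fun k _ => Finset.sum_le_sum fun l _ => by
          linarith [mul_le_mul_of_nonneg_right (Real.mul_log_le_mul_log_add_sub (hp k) (hq l))
            (hc0 k l)]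
    _ = ∑ k, p k * Real.log (p k) - ∑ k, p k + ∑ l, q l := by
        rw [← Finset.sum_sub_distrib]
        simp_rw [Finset.sum_add_distrib, ← Finset.mul_sum, hrow, mul_one]
        rw [Finset.sum_comm]
        simp_rw [← Finset.mul_sum, hcol, mul_one]
    _ = ∑ k, p k * Real.log (p k) := by rw [hpq]; ring

lemma Matrix.IsHermitian.re_trace_mul_matLog {A B : Matrix n n ℂ} (hA : A.IsHermitian)
    (hB : B.IsHermitian) :
    ((A * matLog B).trace).re = ∑ k, ∑ l, hA.eigenvalues k * Real.log (hB.eigenvalues l)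
      * ‖(star (hA.eigenvectorUnitary : Matrix n n ℂ) * hB.eigenvectorUnitary) k l‖ ^ 2 := by
  rw [hB.matLog_eq]
  nth_rewrite 1 [hA.eq_unitary_conj_diagonal]
  rw [trace_unitary_conj_diagonal_mul]
  exact Complex.ofReal_re _

lemma relEnt_nonneg {ρ σ : Matrix n n ℂ} (hρ : ρ.PosDef) (hσ : σ.PosDef)
    (htr : ρ.trace = σ.trace) : 0 ≤ relEnt ρ σ := by
  have hpq : ∑ k, hρ.1.eigenvalues k = ∑ l, hσ.1.eigenvalues l := by
    rw [hρ.1.trace_eq_sum_eigenvalues, hσ.1.trace_eq_sum_eigenvalues] at htr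
    exact_mod_cast htr
  rw [relEnt, hρ.1.re_trace_mul_matLog hρ.1, hρ.1.re_trace_mul_matLog hσ.1,
    Unitary.star_mul_self_of_mem hρ.1.eigenvectorUnitary.2, sub_nonneg]
  simp only [one_apply, apply_ite, norm_one, norm_zero]
  simpa using sum_mul_log_le_of_mem_doublyStochastic hρ.eigenvalues_pos hσ.eigenvalues_pos hpq
    (normSq_apply_mem_doublyStochastic (mul_mem (Unitary.star_mem hρ.1.eigenvectorUnitary.2)
      hσ.1.eigenvectorUnitary.2))

end Klein

theorem relEnt_prod_eq_relEnt_prodMarg_add_general {ι : Type*} [Fintype ι] [DecidableEq ι]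
    {d : ι → Type*} [∀ i, Fintype (d i)] [∀ i, DecidableEq (d i)] [∀ i, Nonempty (d i)]
    (ρ : Matrix ((i : ι) → d i) ((i : ι) → d i) ℂ) (hρ : ρ.PosDef) (hρtr : ρ.trace = 1)
    (σ : ∀ i, Matrix (d i) (d i) ℂ) (hσ : ∀ i, (σ i).PosDef) (hσtr : ∀ i, (σ i).trace = 1) :
    relEnt ρ (fun x y => ∏ i, σ i (x i) (y i))
        = relEnt ρ (prodMarg ρ) + ∑ i, relEnt (siteMarg ρ i) (σ i)
      ∧ relEnt ρ (prodMarg ρ) ≤ relEnt ρ (fun x y => ∏ i, σ i (x i) (y i)) := by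
  change relEnt ρ (piKronecker σ) = relEnt ρ (piKronecker (siteMarg ρ)) + _
    ∧ relEnt ρ (piKronecker (siteMarg ρ)) ≤ relEnt ρ (piKronecker σ)
  have hmarg : ∀ i, (siteMarg ρ i).PosDef := hρ.siteMarg
  have hsplit : relEnt ρ (piKronecker σ)
      = relEnt ρ (piKronecker (siteMarg ρ)) + ∑ i, relEnt (siteMarg ρ i) (σ i) := by
    simp only [relEnt, trace_mul_matLog_piKronecker ρ hσ, trace_mul_matLog_piKronecker ρ hmarg,
      Complex.re_sum, Finset.sum_sub_distrib]
    ring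
  refine ⟨hsplit, ?_⟩
  rw [hsplit]
  exact le_add_of_nonneg_right (Finset.sum_nonneg fun i _ =>
    relEnt_nonneg (hmarg i) (hσ i) (by rw [trace_siteMarg, hρtr, hσtr]))

theorem relEnt_prod_eq_relEnt_prodMarg_add {ι : Type*} [Fintype ι] [DecidableEq ι] [Nonempty ι]
    {d : ι → Type*} [∀ i, Fintype (d i)] [∀ i, DecidableEq (d i)] [∀ i, Nonempty (d i)]
    (ρ : Matrix ((i : ι) → d i) ((i : ι) → d i) ℂ) (hρ : ρ.PosDef) (hρtr : ρ.trace = 1)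
    (σ : ∀ i, Matrix (d i) (d i) ℂ) (hσ : ∀ i, (σ i).PosDef) (hσtr : ∀ i, (σ i).trace = 1) :
    relEnt ρ (fun x y => ∏ i, σ i (x i) (y i))
        = relEnt ρ (prodMarg ρ) + ∑ i, relEnt (siteMarg ρ i) (σ i)
      ∧ relEnt ρ (prodMarg ρ) ≤ relEnt ρ (fun x y => ∏ i, σ i (x i) (y i)) :=
  relEnt_prod_eq_relEnt_prodMarg_add_general ρ hρ hρtr σ hσ hσtr
end
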